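/- arXiv:1903.00215 — 2 statements merged into one kernel-verified Lean document; each statement's English description precedes it below -/
import Mathlib

section
/- Let ν be a non-atomic Borel probability measure on [0,1] and let λ, λ' ≥ 0 satisfy |λ − λ'| ≤ 1. Then sup_{x∈[0,1]} |cp^ν_{√λ}(x) − cp^ν_{√λ'}(x)| ≤ |λ − λ'| · Σ_{k=0}^∞ (k+1)(λ+1)^k / k! = |λ − λ'| · (λ + 2) e^{λ+1}. -/
open MeasureTheory Real Filter

/-- Iterated integrals `p_n` w.r.t. a measure `ν`: `p_0 = 1`,
`p_n(x) = ∫_0^x p_{n-1} dν` if `n` odd, `p_n(x) = ∫_0^x p_{n-1} dt` if `n` even. -/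
noncomputable def pIter (ν : Measure ℝ) : ℕ → ℝ → ℝ
  | 0 => fun _ => 1
  | (n+1) => fun x =>
      if Odd (n+1) then ∫ t in Set.Ioc (0:ℝ) x, pIter ν n t ∂ν
      else ∫ t in Set.Ioc (0:ℝ) x, pIter ν n t

/-- Iterated integrals `q_n` w.r.t. a measure `ν`: `q_0 = 1`,
`q_n(x) = ∫_0^x q_{n-1} dt` if `n` odd, `q_n(x) = ∫_0^x q_{n-1} dν` if `n` even. -/
noncomputable def qIter (ν : Measure ℝ) : ℕ → ℝ → ℝ
  | 0 => fun _ => 1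
  | (n+1) => fun x =>
      if Odd (n+1) then ∫ t in Set.Ioc (0:ℝ) x, qIter ν n t
      else ∫ t in Set.Ioc (0:ℝ) x, qIter ν n t ∂ν

noncomputable def spF (ν : Measure ℝ) (z x : ℝ) : ℝ :=
  ∑' n : ℕ, (-1)^n * z^(2*n+1) * pIter ν (2*n+1) x

noncomputable def sqF (ν : Measure ℝ) (z x : ℝ) : ℝ :=
  ∑' n : ℕ, (-1)^n * z^(2*n+1) * qIter ν (2*n+1) x

noncomputable def cpF (ν : Measure ℝ) (z x : ℝ) : ℝ :=
  ∑' n : ℕ, (-1)^n * z^(2*n) * pIter ν (2*n) x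

noncomputable def cqF (ν : Measure ℝ) (z x : ℝ) : ℝ :=
  ∑' n : ℕ, (-1)^n * z^(2*n) * qIter ν (2*n) x

noncomputable def sinpF (ν : Measure ℝ) (z : ℝ) : ℝ := spF ν z 1
noncomputable def sinqF (ν : Measure ℝ) (z : ℝ) : ℝ := sqF ν z 1
noncomputable def cospF (ν : Measure ℝ) (z : ℝ) : ℝ := cpF ν z 1
noncomputable def cosqF (ν : Measure ℝ) (z : ℝ) : ℝ := cqF ν z 1

/-- distribution function `F(x) = ν [0,x]` -/
noncomputable def distF (ν : Measure ℝ) (x : ℝ) : ℝ := (ν (Set.Icc 0 x)).toReal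

/-- supremum distance of two functions over `[0,1]` -/
noncomputable def supDist (f g : ℝ → ℝ) : ℝ := ⨆ x : Set.Icc (0:ℝ) 1, |f x.1 - g x.1|

lemma pIter_succ (ν : Measure ℝ) (n : ℕ) (x : ℝ) :
    pIter ν (n+1) x = if Odd (n+1) then ∫ t in Set.Ioc (0:ℝ) x, pIter ν n t ∂ν
      else ∫ t in Set.Ioc (0:ℝ) x, pIter ν n t := rfl

lemma pIter_odd (ν : Measure ℝ) (k : ℕ) (x : ℝ) :
    pIter ν (2*k+1) x = ∫ t in Set.Ioc (0:ℝ) x, pIter ν (2*k) t ∂ν := by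
  rw [pIter_succ, if_pos (odd_two_mul_add_one k)]

lemma pIter_even (ν : Measure ℝ) (k : ℕ) (x : ℝ) :
    pIter ν (2*(k+1)) x = ∫ t in Set.Ioc (0:ℝ) x, pIter ν (2*k+1) t := by
  have h : 2*(k+1) = (2*k+1)+1 := by ring
  rw [h, pIter_succ, if_neg]
  simp [Nat.odd_iff, Nat.add_mod, Nat.mul_mod]

lemma integrableOn_of_mono (μ : Measure ℝ) {x : ℝ} (hfin : μ (Set.Ioc 0 x) ≠ ⊤)
    (f : ℝ → ℝ) (hf : Measurable f) (h0 : ∀ t, 0 ≤ f t) (hm : Monotone f) :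
    IntegrableOn f (Set.Ioc 0 x) μ := by
  refine Measure.integrableOn_of_bounded hfin hf.aestronglyMeasurable (M := f x) ?_
  refine (ae_restrict_iff' measurableSet_Ioc).2 (ae_of_all _ fun t ht => ?_)
  rw [Real.norm_eq_abs, abs_of_nonneg (h0 t)]
  exact hm ht.2

section
variable (μ : Measure ℝ) {f : ℝ → ℝ}

lemma stepGood (hfin : ∀ x : ℝ, μ (Set.Ioc 0 x) ≠ ⊤)
    (hf : Measurable f) (h0 : ∀ t, 0 ≤ f t) (hm : Monotone f) :
    Measurable (fun x => ∫ t in Set.Ioc (0:ℝ) x, f t ∂μ) ∧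
    (∀ x, 0 ≤ ∫ t in Set.Ioc (0:ℝ) x, f t ∂μ) ∧
    Monotone (fun x => ∫ t in Set.Ioc (0:ℝ) x, f t ∂μ) ∧
    (∀ x C, (∀ t ∈ Set.Ioc (0:ℝ) x, f t ≤ C) →
      (∫ t in Set.Ioc (0:ℝ) x, f t ∂μ) ≤ C * (μ (Set.Ioc 0 x)).toReal) := by
  have hint : ∀ x : ℝ, IntegrableOn f (Set.Ioc 0 x) μ := by
    intro x
    refine Measure.integrableOn_of_bounded (hfin x) hf.aestronglyMeasurable (M := f x) ?_
    refine (ae_restrict_iff' measurableSet_Ioc).2 (ae_of_all _ fun t ht => ?_)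
    rw [Real.norm_eq_abs, abs_of_nonneg (h0 t)]
    exact hm ht.2
  have hnn : ∀ x, 0 ≤ ∫ t in Set.Ioc (0:ℝ) x, f t ∂μ := fun x =>
    setIntegral_nonneg measurableSet_Ioc fun t _ => h0 t
  have hmon : Monotone (fun x => ∫ t in Set.Ioc (0:ℝ) x, f t ∂μ) := by
    intro x y hxy
    refine setIntegral_mono_set (hint y)
      ((ae_restrict_iff' measurableSet_Ioc).2 (ae_of_all _ fun t _ => h0 t))
      (HasSubset.Subset.eventuallyLE (Set.Ioc_subset_Ioc_right hxy))
  refine ⟨hmon.measurable, hnn, hmon, fun x C hC => ?_⟩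
  calc (∫ t in Set.Ioc (0:ℝ) x, f t ∂μ) ≤ ‖∫ t in Set.Ioc (0:ℝ) x, f t ∂μ‖ := le_abs_self _
    _ ≤ C * (μ (Set.Ioc 0 x)).toReal := by
        refine norm_setIntegral_le_of_norm_le_const (hfin x).lt_top
          fun t ht => ?_
        rw [Real.norm_eq_abs, abs_of_nonneg (h0 t)]
        exact hC t ht

end

lemma pIter_good (ν : Measure ℝ) [IsProbabilityMeasure ν] (n : ℕ) :
    Measurable (pIter ν n) ∧ (∀ x, 0 ≤ pIter ν n x) ∧ Monotone (pIter ν n) := by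
  induction n with
  | zero => exact ⟨measurable_const, fun x => zero_le_one, monotone_const⟩
  | succ n ih =>
    obtain ⟨hmeas, h0, hmono⟩ := ih
    by_cases hodd : Odd (n+1)
    · have hfin : ∀ x : ℝ, ν (Set.Ioc 0 x) ≠ ⊤ := fun x => measure_ne_top ν _
      have := stepGood ν hfin hmeas h0 hmono
      have he : pIter ν (n+1) = fun x => ∫ t in Set.Ioc (0:ℝ) x, pIter ν n t ∂ν := by
        funext x; rw [pIter_succ, if_pos hodd]
      rw [he]
      exact ⟨this.1, this.2.1, this.2.2.1⟩
    · have hfin : ∀ x : ℝ, volume (Set.Ioc (0:ℝ) x) ≠ ⊤ := fun x => by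
        simp [Real.volume_Ioc]
      have := stepGood volume hfin hmeas h0 hmono
      have he : pIter ν (n+1) = fun x => ∫ t in Set.Ioc (0:ℝ) x, pIter ν n t := by
        funext x; rw [pIter_succ, if_neg hodd]
      rw [he]
      exact ⟨this.1, this.2.1, this.2.2.1⟩

lemma pIter_bound (ν : Measure ℝ) [IsProbabilityMeasure ν] (k : ℕ) :
    (∀ x ∈ Set.Icc (0:ℝ) 1, pIter ν (2*k) x ≤ x^k / k.factorial) ∧
    (∀ x ∈ Set.Icc (0:ℝ) 1, pIter ν (2*k+1) x ≤ x^k / k.factorial) := by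
  have key : ∀ k : ℕ, (∀ x ∈ Set.Icc (0:ℝ) 1, pIter ν (2*k) x ≤ x^k / k.factorial) →
      ∀ x ∈ Set.Icc (0:ℝ) 1, pIter ν (2*k+1) x ≤ x^k / k.factorial := by
    intro k hk x hx
    obtain ⟨hmeas, h0, hmono⟩ := pIter_good ν (2*k)
    have hstep := (stepGood ν (fun x => measure_ne_top ν _) hmeas h0 hmono).2.2.2
    rw [pIter_odd]
    calc (∫ t in Set.Ioc (0:ℝ) x, pIter ν (2*k) t ∂ν)
        ≤ (x^k / k.factorial) * (ν (Set.Ioc 0 x)).toReal := by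
          refine hstep x _ fun t ht => le_trans (hk t ⟨le_of_lt ht.1, ht.2.trans hx.2⟩) ?_
          gcongr
          exacts [le_of_lt ht.1, ht.2]
      _ ≤ (x^k / k.factorial) * 1 := by
          have h1 : (ν (Set.Ioc 0 x)).toReal ≤ 1 := by
            refine ENNReal.toReal_le_of_le_ofReal zero_le_one ?_
            simpa using prob_le_one (μ := ν) (s := Set.Ioc 0 x)
          have hnn : 0 ≤ x^k / (k.factorial:ℝ) :=
            div_nonneg (pow_nonneg hx.1 k) (Nat.cast_nonneg _)
          nlinarith
      _ = x^k / k.factorial := mul_one _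
  induction k with
  | zero =>
    constructor
    · intro x hx; simp [pIter]
    · exact key 0 (by intro x hx; simp [pIter])
  | succ k ih =>
    have heven : ∀ x ∈ Set.Icc (0:ℝ) 1, pIter ν (2*(k+1)) x ≤ x^(k+1) / (k+1).factorial := by
      intro x hx
      obtain ⟨hmeas, h0, hmono⟩ := pIter_good ν (2*k+1)
      rw [pIter_even]
      have hint1 : IntegrableOn (pIter ν (2*k+1)) (Set.Ioc 0 x) volume :=
        integrableOn_of_mono volume (by simp [Real.volume_Ioc]) _ hmeas h0 hmono
      have hint2 : IntegrableOn (fun t : ℝ => t^k / (k.factorial:ℝ)) (Set.Ioc 0 x) volume := by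
        apply Continuous.integrableOn_Ioc
        exact (continuous_pow k).div_const _
      calc (∫ t in Set.Ioc (0:ℝ) x, pIter ν (2*k+1) t)
          ≤ ∫ t in Set.Ioc (0:ℝ) x, t^k / k.factorial := by
            refine setIntegral_mono_on hint1 hint2 measurableSet_Ioc fun t ht => ?_
            exact ih.2 t ⟨le_of_lt ht.1, ht.2.trans hx.2⟩
        _ = (∫ t in Set.Ioc (0:ℝ) x, t^k) / k.factorial := by
            rw [integral_div]
        _ = (x^(k+1) / (k+1)) / k.factorial := by
            rw [← intervalIntegral.integral_of_le hx.1, integral_pow]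
            norm_num
        _ = x^(k+1) / (k+1).factorial := by
            rw [div_div, Nat.factorial_succ]
            push_cast
            ring_nf
    exact ⟨heven, key (k+1) heven⟩

lemma abs_pow_sub_pow_le' (a b M : ℝ) (ha : 0 ≤ a) (hb : 0 ≤ b) (haM : a ≤ M) (hbM : b ≤ M) :
    ∀ n : ℕ, |a^(n+1) - b^(n+1)| ≤ (n+1) * |a-b| * M^n := by
  have hM : 0 ≤ M := ha.trans haM
  intro n
  induction n with
  | zero => simp
  | succ n ih =>
    have key : a^(n+2) - b^(n+2) = a * (a^(n+1) - b^(n+1)) + (a - b) * b^(n+1) := by ring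
    calc |a^(n+2) - b^(n+2)| ≤ |a * (a^(n+1) - b^(n+1))| + |(a - b) * b^(n+1)| := by
          rw [key]; exact abs_add_le _ _
      _ = a * |a^(n+1) - b^(n+1)| + |a - b| * b^(n+1) := by
          rw [abs_mul, abs_mul, abs_of_nonneg ha, abs_of_nonneg (pow_nonneg hb _)]
      _ ≤ M * ((n+1) * |a-b| * M^n) + |a - b| * M^(n+1) := by
          gcongr
      _ = ((n:ℝ)+1+1) * |a-b| * M^(n+1) := by ring
      _ = ((n+1:ℕ)+1) * |a-b| * M^(n+1) := by push_cast; ring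

lemma exp_tsum_eq (y : ℝ) : ∑' n : ℕ, y^n / n.factorial = Real.exp y := by
  rw [Real.exp_eq_exp_ℝ, NormedSpace.exp_eq_tsum_div]

lemma summable_succ_mul (y : ℝ) (hy : 0 ≤ y) :
    Summable (fun k : ℕ => ((k:ℝ)+1) * y^k / k.factorial) := by
  refine Summable.of_nonneg_of_le (fun k => by positivity) (fun k => ?_)
    (Real.summable_pow_div_factorial (2*y))
  have h1 : ((k:ℝ)+1) ≤ 2^k := by
    exact_mod_cast Nat.lt_two_pow_self (n := k)
  calc ((k:ℝ)+1) * y^k / k.factorial ≤ 2^k * y^k / k.factorial := by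
        gcongr
    _ = (2*y)^k / k.factorial := by rw [mul_pow]

lemma tsum_succ_mul (y : ℝ) (hy : 0 ≤ y) :
    ∑' k : ℕ, ((k:ℝ)+1) * y^k / k.factorial = (1 + y) * Real.exp y := by
  have h1 : Summable (fun k : ℕ => y^k / (k.factorial:ℝ)) := Real.summable_pow_div_factorial y
  have h2 : Summable (fun k : ℕ => (k:ℝ) * y^k / k.factorial) := by
    have := (summable_succ_mul y hy).sub h1
    refine this.congr fun k => ?_
    ring
  have hsplit : ∀ k : ℕ, ((k:ℝ)+1) * y^k / k.factorial
      = y^k / k.factorial + (k:ℝ) * y^k / k.factorial := fun k => by ring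
  rw [tsum_congr hsplit, Summable.tsum_add h1 h2, exp_tsum_eq]
  have h3 : ∑' k : ℕ, (k:ℝ) * y^k / k.factorial = y * Real.exp y := by
    rw [Summable.tsum_eq_zero_add h2]
    simp only [Nat.cast_zero, Nat.cast_succ]
    have : ∀ n : ℕ, ((n:ℝ)+1) * y^(n+1) / (n+1).factorial = y * (y^n / n.factorial) := by
      intro n
      have hne : ((n:ℝ)+1) ≠ 0 := by positivity
      have hfe : ((n.factorial:ℝ)) ≠ 0 := by positivity
      rw [Nat.factorial_succ]
      push_cast
      field_simp
      ring
    rw [tsum_congr this, tsum_mul_left, exp_tsum_eq]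
    simp
  rw [h3]
  ring

set_option maxHeartbeats 1000000 in
/-- Stability of the Neumann eigenfunctions in the eigenvalue parameter:
for `λ, λ' ≥ 0` with `|λ − λ'| ≤ 1`,
`sup_{x∈[0,1]} |cp_{√λ}(x) − cp_{√λ'}(x)| ≤ |λ − λ'| ∑_{k≥0} (k+1)(λ+1)^k/k!
 = |λ − λ'| (λ+2) e^{λ+1}`. -/
theorem stmt16 (ν : Measure ℝ) [IsProbabilityMeasure ν] [NullSingletonClass ν]
    (hsupp : ν (Set.Icc (0:ℝ) 1)ᶜ = 0)
    (lam lam' : ℝ) (hlam : 0 ≤ lam) (hlam' : 0 ≤ lam') (hclose : |lam - lam'| ≤ 1) :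
    (∀ x ∈ Set.Icc (0:ℝ) 1,
      |cpF ν (Real.sqrt lam) x - cpF ν (Real.sqrt lam') x|
        ≤ |lam - lam'| * ∑' k : ℕ, (k+1 : ℝ) * (lam+1)^k / k.factorial) ∧
    ∑' k : ℕ, (k+1 : ℝ) * (lam+1)^k / k.factorial = (lam + 2) * Real.exp (lam + 1) := by
  have hM : (0:ℝ) ≤ lam + 1 := by linarith
  have hlamM : lam ≤ lam + 1 := by linarith
  have hlamM' : lam' ≤ lam + 1 := by
    have := neg_abs_le (lam - lam')
    linarith
  constructor
  · intro x hx
    set a : ℕ → ℝ := fun n => pIter ν (2*n) x with ha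
    have ha0 : ∀ n, 0 ≤ a n := fun n => (pIter_good ν (2*n)).2.1 x
    have hale : ∀ n, a n ≤ 1 / n.factorial := by
      intro n
      refine ((pIter_bound ν n).1 x hx).trans ?_
      have hpos : (0:ℝ) < n.factorial := Nat.cast_pos.2 n.factorial_pos
      have h1 : x^n ≤ 1 := pow_le_one₀ hx.1 hx.2
      exact (div_le_div_iff_of_pos_right hpos).2 h1
    -- rewrite sqrt powers
    have hz : ∀ (l : ℝ), 0 ≤ l → ∀ n : ℕ, (Real.sqrt l)^(2*n) = l^n := by
      intro l hl n
      rw [pow_mul, Real.sq_sqrt hl]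
    have hcp : ∀ (l : ℝ), 0 ≤ l → cpF ν (Real.sqrt l) x = ∑' n : ℕ, (-1)^n * l^n * a n := by
      intro l hl
      exact tsum_congr fun n => by rw [hz l hl n]
    have hsum : ∀ (l : ℝ), 0 ≤ l → l ≤ lam + 1 →
        Summable (fun n : ℕ => (-1:ℝ)^n * l^n * a n) := by
      intro l hl hlle
      refine Summable.of_abs ?_
      refine Summable.of_nonneg_of_le (fun n => abs_nonneg _) (fun n => ?_)
        (Real.summable_pow_div_factorial (lam+1))
      rw [abs_mul, abs_mul, abs_pow, abs_pow, abs_neg, abs_one, one_pow, one_mul,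
        abs_of_nonneg hl, abs_of_nonneg (ha0 n)]
      calc l^n * a n ≤ (lam+1)^n * (1/n.factorial) := by
            gcongr
            · exact ha0 n
            · exact hale n
        _ = (lam+1)^n / n.factorial := by ring
    have hsum1 := hsum lam hlam hlamM
    have hsum2 := hsum lam' hlam' hlamM'
    rw [hcp lam hlam, hcp lam' hlam', ← Summable.tsum_sub hsum1 hsum2]
    have hterm : ∀ n : ℕ, (-1:ℝ)^n * lam^n * a n - (-1)^n * lam'^n * a n
        = (-1)^n * ((lam^n - lam'^n) * a n) := fun n => by ring
    rw [tsum_congr hterm]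
    have hDs : Summable (fun n : ℕ => |(-1:ℝ)^n * ((lam^n - lam'^n) * a n)|) := by
      refine Summable.of_nonneg_of_le (fun n => abs_nonneg _) (fun n => ?_)
        ((Real.summable_pow_div_factorial (lam+1)).mul_left 2)
      rw [abs_mul, abs_pow, abs_neg, abs_one, one_pow, one_mul, abs_mul,
        abs_of_nonneg (ha0 n)]
      have hA : |lam^n - lam'^n| ≤ (lam+1)^n + (lam+1)^n := by
        refine (abs_sub _ _).trans ?_
        rw [abs_pow, abs_pow, abs_of_nonneg hlam, abs_of_nonneg hlam']
        gcongr <;> assumption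
      calc |lam^n - lam'^n| * a n ≤ ((lam+1)^n + (lam+1)^n) * (1/n.factorial) :=
            mul_le_mul hA (hale n) (ha0 n) (by positivity)
        _ = 2 * ((lam+1)^n / n.factorial) := by ring
    calc |∑' n : ℕ, (-1:ℝ)^n * ((lam^n - lam'^n) * a n)|
        ≤ ∑' n : ℕ, |(-1:ℝ)^n * ((lam^n - lam'^n) * a n)| := by
          have := norm_tsum_le_tsum_norm (f := fun n : ℕ => (-1:ℝ)^n * ((lam^n - lam'^n) * a n))
            (by simpa only [Real.norm_eq_abs] using hDs)
          simpa only [Real.norm_eq_abs] using this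
      _ ≤ |lam - lam'| * ∑' k : ℕ, ((k:ℝ)+1) * (lam+1)^k / k.factorial := by
          rw [Summable.tsum_eq_zero_add hDs]
          have h0 : |(-1:ℝ)^0 * ((lam^0 - lam'^0) * a 0)| = 0 := by simp
          rw [h0, zero_add, ← tsum_mul_left]
          refine Summable.tsum_le_tsum (fun k => ?_) (hDs.comp_injective (add_left_injective 1)) (((summable_succ_mul (lam+1) hM)).mul_left _)
          rw [abs_mul, abs_pow, abs_neg, abs_one, one_pow, one_mul, abs_mul,
            abs_of_nonneg (ha0 (k+1))]
          calc |lam^(k+1) - lam'^(k+1)| * a (k+1)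
              ≤ ((k+1) * |lam - lam'| * (lam+1)^k) * (1/(k+1).factorial) :=
                mul_le_mul (abs_pow_sub_pow_le' lam lam' (lam+1) hlam hlam' hlamM hlamM' k)
                  (hale (k+1)) (ha0 (k+1)) (by positivity)
            _ = |lam - lam'| * (((k:ℝ)+1) * (lam+1)^k / (k+1).factorial) := by
                push_cast; ring
            _ ≤ |lam - lam'| * (((k:ℝ)+1) * (lam+1)^k / k.factorial) := by
                have hfac : (k.factorial:ℝ) ≤ ((k+1).factorial:ℝ) := by
                  exact_mod_cast Nat.factorial_le (Nat.le_succ k)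
                have hdd : ((k:ℝ)+1) * (lam+1)^k / (k+1).factorial
                    ≤ ((k:ℝ)+1) * (lam+1)^k / k.factorial :=
                  div_le_div_of_nonneg_left (by positivity)
                    (Nat.cast_pos.2 k.factorial_pos) hfac
                exact mul_le_mul_of_nonneg_left hdd (abs_nonneg _)
      _ = |lam - lam'| * ∑' k : ℕ, ((k:ℝ)+1 : ℝ) * (lam+1)^k / k.factorial := rfl
  · rw [show ∑' k : ℕ, ((k:ℝ)+1 : ℝ) * (lam+1)^k / k.factorial = (1 + (lam+1)) * Real.exp (lam+1) from tsum_succ_mul (lam+1) hM]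
    ring
end

section
/- Let 0 < w₁ ≤ w₂ with w₁ + w₂ = 1, let μ_n^w be the n-th approximating measure of the weighted Cantor measure with distribution function F_n(t) = μ_n^w([0,t]), and let μ^w be a Borel probability measure on [0,1] satisfying the self-similarity (invariance) relation μ^w(A) = w₁ μ^w(S₁^{-1}(A)) + w₂ μ^w(S₂^{-1}(A)) for all Borel sets A ⊆ [0,1], with distribution function F(t) = μ^w([0,t]). Then sup_{t∈[0,1]} |F(t) − F_n(t)| ≤ w₂^n / w₁ for all n ∈ ℕ. -/
open MeasureTheory Real Filter

open scoped ENNReal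

/-- Left endpoint of the interval `I_x = S_{x₁} ∘ ⋯ ∘ S_{x_n}([0,1])`, where
`S₁(y) = y/3` (digit `false`) and `S₂(y) = y/3 + 2/3` (digit `true`). -/
noncomputable def cantorLeft {n : ℕ} (x : Fin n → Bool) : ℝ :=
  ∑ i : Fin n, (if x i then (2:ℝ) else 0) / 3 ^ ((i : ℕ) + 1)

/-- The interval `I_x` of level `n`. -/
noncomputable def cantorInterval {n : ℕ} (x : Fin n → Bool) : Set ℝ :=
  Set.Icc (cantorLeft x) (cantorLeft x + (1/3 : ℝ)^n)

/-- The weight `∏_{i=1}^n w_{x_i}` of the word `x`. -/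
noncomputable def cantorWt (w₁ w₂ : ℝ) {n : ℕ} (x : Fin n → Bool) : ℝ :=
  ∏ i : Fin n, (if x i then w₂ else w₁)

/-- The `n`-th approximating measure `μ_n^w` of the weighted Cantor measure:
`μ_n^w(A) = 3^n ∑_{x ∈ {1,2}^n} λ¹(A ∩ I_x) ∏_{i=1}^n w_{x_i}`. -/
noncomputable def cantorApprox (w₁ w₂ : ℝ) (n : ℕ) : Measure ℝ :=
  (3 : ℝ≥0∞) ^ n • ∑ x : Fin n → Bool,
    ENNReal.ofReal (cantorWt w₁ w₂ x) • volume.restrict (cantorInterval x)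

section AuxSep
variable {n : ℕ}

lemma cantorLeft_nonneg (x : Fin n → Bool) : 0 ≤ cantorLeft x := by
  unfold cantorLeft
  apply Finset.sum_nonneg
  intro i _
  split <;> positivity

lemma geom_aux : ∀ n : ℕ, ∑ i : Fin n, (2:ℝ)/3^((i:ℕ)+1) = 1 - (1/3)^n := by
  intro n
  induction n with
  | zero => simp
  | succ m ih =>
    rw [Fin.sum_univ_castSucc]
    simp only [Fin.coe_castSucc, Fin.val_last, ih]
    rw [div_pow, one_pow, div_pow, one_pow]
    field_simp
    ring

lemma cantorLeft_le (x : Fin n → Bool) : cantorLeft x ≤ 1 - (1/3:ℝ)^n := by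
  rw [← geom_aux n]
  unfold cantorLeft
  apply Finset.sum_le_sum
  intro i _
  apply div_le_div_of_nonneg_right ?_ (by positivity)
  · split <;> norm_num

lemma cantorLeft_tail (x : Fin (n+1) → Bool) :
    cantorLeft x = (if x 0 then (2:ℝ) else 0)/3 + cantorLeft (Fin.tail x)/3 := by
  unfold cantorLeft
  rw [Fin.sum_univ_succ, Finset.sum_div]
  congr 1
  · norm_num
  · apply Finset.sum_congr rfl
    intro i _
    have h1 : ((i.succ : Fin (n+1)) : ℕ) = (i:ℕ)+1 := rfl
    have h2 : Fin.tail x i = x i.succ := rfl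
    rw [h1, h2]
    rw [pow_succ]
    ring

lemma cantorLeft_sep : ∀ {n : ℕ} (x y : Fin n → Bool), x ≠ y →
    cantorLeft x + (1/3:ℝ)^n < cantorLeft y ∨ cantorLeft y + (1/3:ℝ)^n < cantorLeft x := by
  intro n
  induction n with
  | zero => intro x y h; exact absurd (Subsingleton.elim x y) h
  | succ m ih =>
    intro x y h
    rw [cantorLeft_tail x, cantorLeft_tail y]
    by_cases h0 : x 0 = y 0
    · have ht : Fin.tail x ≠ Fin.tail y := by
        intro hc
        apply h
        funext i
        cases i using Fin.cases with
        | zero => exact h0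
        | succ j => exact congrFun hc j
      rw [h0]
      rcases ih _ _ ht with h1 | h1
      · left
        rw [pow_succ]
        linarith
      · right
        rw [pow_succ]
        linarith
    · have bx1 := cantorLeft_nonneg (Fin.tail x)
      have bx2 := cantorLeft_le (Fin.tail x)
      have by1 := cantorLeft_nonneg (Fin.tail y)
      have by2 := cantorLeft_le (Fin.tail y)
      have hp : (0:ℝ) < (1/3:ℝ)^m := by positivity
      cases hx0 : x 0 with
      | false =>
        have hy0 : y 0 = true := by
          cases hy : y 0
          · exact absurd (hx0.trans hy.symm) h0
          · rfl
        rw [hy0]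
        norm_num
        left
        rw [pow_succ]
        linarith
      | true =>
        have hy0 : y 0 = false := by
          cases hy : y 0
          · rfl
          · exact absurd (hx0.trans hy.symm) h0
        rw [hy0]
        norm_num
        right
        rw [pow_succ]
        linarith

end AuxSep

section AuxM
variable {n : ℕ} {w₁ w₂ : ℝ}

lemma cantorWt_tail (x : Fin (n+1) → Bool) :
    cantorWt w₁ w₂ x = (if x 0 then w₂ else w₁) * cantorWt w₁ w₂ (Fin.tail x) := by
  unfold cantorWt
  rw [Fin.prod_univ_succ]
  rfl

lemma cantorWt_nonneg (hw₁ : 0 ≤ w₁) (hw₂ : 0 ≤ w₂) (x : Fin n → Bool) :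
    0 ≤ cantorWt w₁ w₂ x := by
  apply Finset.prod_nonneg
  intro i _
  split <;> assumption

lemma cantorWt_le (hw₁ : 0 ≤ w₁) (hw : w₁ ≤ w₂) (x : Fin n → Bool) :
    cantorWt w₁ w₂ x ≤ w₂ ^ n := by
  unfold cantorWt
  have h : w₂ ^ n = ∏ _i : Fin n, w₂ := by
    rw [Finset.prod_const]
    simp
  rw [h]
  apply Finset.prod_le_prod
  · intro i _
    split_ifs
    · exact hw₁.trans hw
    · exact hw₁
  · intro i _
    split_ifs
    · exact le_refl w₂
    · exact hw

lemma cantorWt_sum : ∀ n : ℕ, ∑ x : Fin n → Bool, cantorWt w₁ w₂ x = (w₁ + w₂) ^ n := by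
  intro n
  induction n with
  | zero => simp [cantorWt]
  | succ m ih =>
    rw [← Equiv.sum_comp (Fin.consEquiv (fun _ : Fin (m+1) => Bool))
      (cantorWt w₁ w₂), Fintype.sum_prod_type]
    have : ∀ (b : Bool) (y : Fin m → Bool),
        cantorWt w₁ w₂ ((Fin.consEquiv (fun _ : Fin (m+1) => Bool)) (b, y))
        = (if b then w₂ else w₁) * cantorWt w₁ w₂ y := by
      intro b y
      rw [cantorWt_tail]
      simp [Fin.consEquiv, Fin.tail]
    simp only [this]
    rw [Fintype.sum_bool, ← Finset.mul_sum, ← Finset.mul_sum, ih]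
    norm_num
    rw [pow_succ]
    ring

lemma cantorInterval_subset (x : Fin n → Bool) :
    cantorInterval x ⊆ Set.Icc (0:ℝ) 1 := by
  apply Set.Icc_subset_Icc (cantorLeft_nonneg x)
  have := cantorLeft_le x
  linarith

lemma cantorInterval_disjoint {x y : Fin n → Bool} (h : x ≠ y) :
    Disjoint (cantorInterval x) (cantorInterval y) := by
  rw [Set.disjoint_left]
  intro z hz hz'
  simp only [cantorInterval, Set.mem_Icc] at hz hz'
  rcases cantorLeft_sep x y h with h1 | h1 <;> linarith [hz.1, hz.2, hz'.1, hz'.2]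

lemma pre_div (a b : ℝ) : (fun y : ℝ => y/3) ⁻¹' Set.Icc a b = Set.Icc (3*a) (3*b) := by
  ext z
  simp only [Set.mem_preimage, Set.mem_Icc]
  constructor <;> intro hz <;> constructor <;> linarith [hz.1, hz.2]

lemma pre_aff (a b : ℝ) :
    (fun y : ℝ => y/3 + 2/3) ⁻¹' Set.Icc a b = Set.Icc (3*a - 2) (3*b - 2) := by
  ext z
  simp only [Set.mem_preimage, Set.mem_Icc]
  constructor <;> intro hz <;> constructor <;> linarith [hz.1, hz.2]

lemma mu_cantorInterval (hw₁ : 0 ≤ w₁) (hw₂ : 0 ≤ w₂)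
    (μ : Measure ℝ) [IsProbabilityMeasure μ]
    (hsupp : μ (Set.Icc (0:ℝ) 1)ᶜ = 0)
    (hinv : ∀ A : Set ℝ, A ⊆ Set.Icc (0:ℝ) 1 → MeasurableSet A →
      μ A = ENNReal.ofReal w₁ * μ ((fun y => y / 3) ⁻¹' A)
          + ENNReal.ofReal w₂ * μ ((fun y => y / 3 + 2 / 3) ⁻¹' A)) :
    ∀ {n : ℕ} (x : Fin n → Bool),
      μ (cantorInterval x) = ENNReal.ofReal (cantorWt w₁ w₂ x) := by
  intro n
  induction n with
  | zero =>
    intro x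
    have h1 : cantorInterval x = Set.Icc (0:ℝ) 1 := by
      unfold cantorInterval
      have : cantorLeft x = 0 := by simp [cantorLeft]
      rw [this]
      norm_num
    have h2 : cantorWt w₁ w₂ x = 1 := by simp [cantorWt]
    rw [h1, h2, (prob_compl_eq_zero_iff measurableSet_Icc).mp hsupp]
    simp
  | succ m ih =>
    intro x
    have hL1 := cantorLeft_nonneg (Fin.tail x)
    have hL2 := cantorLeft_le (Fin.tail x)
    have hIsub : cantorInterval x ⊆ Set.Icc (0:ℝ) 1 := cantorInterval_subset x
    have hIm : MeasurableSet (cantorInterval x) := measurableSet_Icc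
    have hptail : cantorInterval (Fin.tail x) = Set.Icc (cantorLeft (Fin.tail x))
        (cantorLeft (Fin.tail x) + (1/3:ℝ)^m) := rfl
    have hI : cantorInterval x = Set.Icc ((if x 0 then (2:ℝ) else 0)/3 + cantorLeft (Fin.tail x)/3)
        ((if x 0 then (2:ℝ) else 0)/3 + cantorLeft (Fin.tail x)/3 + (1/3:ℝ)^(m+1)) := by
      unfold cantorInterval
      rw [cantorLeft_tail x]
    rw [hinv _ hIsub hIm, hI, pre_div, pre_aff, cantorWt_tail]
    cases h0 : x 0 with
    | false =>
      have hif : (if (false = true) then (2:ℝ) else 0) = 0 := rfl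
      have hif2 : (if (false = true) then w₂ else w₁) = w₁ := rfl
      rw [hif, hif2]
      have e1 : Set.Icc (3*((0:ℝ)/3 + cantorLeft (Fin.tail x)/3))
          (3*((0:ℝ)/3 + cantorLeft (Fin.tail x)/3 + (1/3:ℝ)^(m+1)))
          = cantorInterval (Fin.tail x) := by
        rw [hptail]
        have ea : 3*((0:ℝ)/3 + cantorLeft (Fin.tail x)/3) = cantorLeft (Fin.tail x) := by ring
        have eb : 3*((0:ℝ)/3 + cantorLeft (Fin.tail x)/3 + (1/3:ℝ)^(m+1))
            = cantorLeft (Fin.tail x) + (1/3:ℝ)^m := by rw [pow_succ]; ring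
        rw [ea, eb]
      have e2 : μ (Set.Icc (3*((0:ℝ)/3 + cantorLeft (Fin.tail x)/3) - 2)
          (3*((0:ℝ)/3 + cantorLeft (Fin.tail x)/3 + (1/3:ℝ)^(m+1)) - 2)) = 0 := by
        apply measure_mono_null _ hsupp
        intro z hz
        simp only [Set.mem_Icc] at hz
        simp only [Set.mem_compl_iff, Set.mem_Icc, not_and_or, not_le]
        left
        have hp : (0:ℝ) < (1/3:ℝ)^m := by positivity
        rw [pow_succ] at hz
        linarith [hz.2]
      rw [e1, e2, ih (Fin.tail x), mul_zero, add_zero, ← ENNReal.ofReal_mul hw₁]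
    | true =>
      have hif : (if (true = true) then (2:ℝ) else 0) = 2 := rfl
      have hif2 : (if (true = true) then w₂ else w₁) = w₂ := rfl
      rw [hif, hif2]
      have e1 : Set.Icc (3*((2:ℝ)/3 + cantorLeft (Fin.tail x)/3) - 2)
          (3*((2:ℝ)/3 + cantorLeft (Fin.tail x)/3 + (1/3:ℝ)^(m+1)) - 2)
          = cantorInterval (Fin.tail x) := by
        rw [hptail]
        have ea : 3*((2:ℝ)/3 + cantorLeft (Fin.tail x)/3) - 2 = cantorLeft (Fin.tail x) := by ring
        have eb : 3*((2:ℝ)/3 + cantorLeft (Fin.tail x)/3 + (1/3:ℝ)^(m+1)) - 2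
            = cantorLeft (Fin.tail x) + (1/3:ℝ)^m := by rw [pow_succ]; ring
        rw [ea, eb]
      have e2 : μ (Set.Icc (3*((2:ℝ)/3 + cantorLeft (Fin.tail x)/3))
          (3*((2:ℝ)/3 + cantorLeft (Fin.tail x)/3 + (1/3:ℝ)^(m+1)))) = 0 := by
        apply measure_mono_null _ hsupp
        intro z hz
        simp only [Set.mem_Icc] at hz
        simp only [Set.mem_compl_iff, Set.mem_Icc, not_and_or, not_le]
        right
        linarith [hz.1]
      rw [e1, e2, ih (Fin.tail x), mul_zero, zero_add, ← ENNReal.ofReal_mul hw₂]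

end AuxM

/-- Proposition 4.2: if `μ^w` is the invariant Borel probability measure of the IFS
`(S₁, S₂)` with weights `(w₁, w₂)` (i.e. `μ^w(A) = w₁ μ^w(S₁⁻¹ A) + w₂ μ^w(S₂⁻¹ A)`
for Borel `A ⊆ [0,1]`), supported on `[0,1]`, then its distribution function `F`
satisfies `sup_{t∈[0,1]} |F(t) − F_n(t)| ≤ w₂^n / w₁` for every `n`. -/
theorem stmt18 (w₁ w₂ : ℝ) (hw₁ : 0 < w₁) (hw : w₁ ≤ w₂) (hsum : w₁ + w₂ = 1)
    (μ : Measure ℝ) [IsProbabilityMeasure μ]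
    (hsupp : μ (Set.Icc (0:ℝ) 1)ᶜ = 0)
    (hinv : ∀ A : Set ℝ, A ⊆ Set.Icc (0:ℝ) 1 → MeasurableSet A →
      μ A = ENNReal.ofReal w₁ * μ ((fun y => y / 3) ⁻¹' A)
          + ENNReal.ofReal w₂ * μ ((fun y => y / 3 + 2 / 3) ⁻¹' A))
    (n : ℕ) :
    ∀ t ∈ Set.Icc (0:ℝ) 1,
      |distF μ t - distF (cantorApprox w₁ w₂ n) t| ≤ w₂ ^ n / w₁ := by
  have hw₂ : 0 < w₂ := lt_of_lt_of_le hw₁ hw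
  have hw2n : (0:ℝ) ≤ w₂ ^ n := by positivity
  intro t ht
  obtain ⟨ht0, ht1⟩ := ht
  set s : Set ℝ := Set.Icc 0 t with hs
  have hsm : MeasurableSet s := measurableSet_Icc
  -- abbreviations
  set L : (Fin n → Bool) → ℝ := fun x => cantorLeft x with hLdef
  have hμI : ∀ x : Fin n → Bool, μ (cantorInterval x) = ENNReal.ofReal (cantorWt w₁ w₂ x) :=
    fun x => mu_cantorInterval hw₁.le hw₂.le μ hsupp hinv x
  -- the union of level-n intervals has full measure
  have hUm : MeasurableSet (⋃ x : Fin n → Bool, cantorInterval x) :=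
    MeasurableSet.iUnion fun x => measurableSet_Icc
  have hPD : ((Finset.univ : Finset (Fin n → Bool)) : Set (Fin n → Bool)).PairwiseDisjoint
      (fun x => cantorInterval x) := fun x _ y _ hxy => cantorInterval_disjoint hxy
  have hUeq : (⋃ x : Fin n → Bool, cantorInterval x)
      = ⋃ x ∈ (Finset.univ : Finset (Fin n → Bool)), cantorInterval x := by simp
  have hμU : μ (⋃ x : Fin n → Bool, cantorInterval x) = 1 := by
    rw [hUeq, measure_biUnion_finset hPD (fun x _ => measurableSet_Icc)]
    have : ∀ x ∈ (Finset.univ : Finset (Fin n → Bool)),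
        μ (cantorInterval x) = ENNReal.ofReal (cantorWt w₁ w₂ x) := fun x _ => hμI x
    rw [Finset.sum_congr rfl this, ← ENNReal.ofReal_sum_of_nonneg
      (fun x _ => cantorWt_nonneg hw₁.le hw₂.le x), cantorWt_sum, hsum, one_pow,
      ENNReal.ofReal_one]
  have hμUc : μ (⋃ x : Fin n → Bool, cantorInterval x)ᶜ = 0 :=
    (prob_compl_eq_zero_iff hUm).mpr hμU
  -- decomposition of μ s
  have hμs : μ s = ∑ x : Fin n → Bool, μ (s ∩ cantorInterval x) := by
    have h1 : μ (s ∩ ⋃ x : Fin n → Bool, cantorInterval x) + μ (s \ ⋃ x, cantorInterval x)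
        = μ s := measure_inter_add_diff s hUm
    have h2 : μ (s \ ⋃ x : Fin n → Bool, cantorInterval x) = 0 :=
      measure_mono_null (fun z hz => hz.2) hμUc
    have h3 : s ∩ (⋃ x : Fin n → Bool, cantorInterval x)
        = ⋃ x ∈ (Finset.univ : Finset (Fin n → Bool)), s ∩ cantorInterval x := by
      rw [Set.inter_iUnion]; simp
    rw [← h1, h2, add_zero, h3, measure_biUnion_finset
      (fun x _ y _ hxy => ((cantorInterval_disjoint hxy).mono
        Set.inter_subset_right Set.inter_subset_right))
      (fun x _ => hsm.inter measurableSet_Icc)]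
  -- formula for the approximating measure
  have hνs : ∀ u : Set ℝ, MeasurableSet u → (cantorApprox w₁ w₂ n) u
      = 3^n * ∑ x : Fin n → Bool, ENNReal.ofReal (cantorWt w₁ w₂ x) * volume (u ∩ cantorInterval x) := by
    intro u hu
    rw [cantorApprox, Measure.smul_apply, Measure.finset_sum_apply]
    congr 1
    apply Finset.sum_congr rfl
    intro x _
    rw [Measure.smul_apply, Measure.restrict_apply hu, smul_eq_mul]
  -- volume of an interval
  have hvolI : ∀ x : Fin n → Bool, volume (cantorInterval x) = ENNReal.ofReal ((1/3:ℝ)^n) := by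
    intro x
    rw [cantorInterval, Real.volume_Icc]
    congr 1
    ring
  have hvol_ne : ∀ x : Fin n → Bool, volume (s ∩ cantorInterval x) ≠ ⊤ := by
    intro x
    exact ((measure_mono Set.inter_subset_right).trans_lt
      (by rw [hvolI]; exact ENNReal.ofReal_lt_top)).ne
  -- distribution functions as sums
  have hFs : distF μ t = ∑ x : Fin n → Bool, (μ (s ∩ cantorInterval x)).toReal := by
    rw [distF, show Set.Icc (0:ℝ) t = s from hs.symm, hμs,
      ENNReal.toReal_sum (fun x _ => measure_ne_top μ _)]
  have hGs : distF (cantorApprox w₁ w₂ n) t = ∑ x : Fin n → Bool,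
      3^n * cantorWt w₁ w₂ x * (volume (s ∩ cantorInterval x)).toReal := by
    rw [distF, show Set.Icc (0:ℝ) t = s from hs.symm, hνs s hsm, ENNReal.toReal_mul,
      ENNReal.toReal_sum (fun x _ => ENNReal.mul_ne_top ENNReal.ofReal_ne_top (hvol_ne x)),
      Finset.mul_sum]
    apply Finset.sum_congr rfl
    intro x _
    rw [ENNReal.toReal_mul, ENNReal.toReal_ofReal (cantorWt_nonneg hw₁.le hw₂.le x)]
    have h3 : ((3:ℝ≥0∞)^n).toReal = (3:ℝ)^n := by
      rw [ENNReal.toReal_pow]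
      norm_num
    rw [h3, mul_assoc]
  -- bounds
  have hFle : ∀ x : Fin n → Bool, (μ (s ∩ cantorInterval x)).toReal ≤ cantorWt w₁ w₂ x := by
    intro x
    apply ENNReal.toReal_le_of_le_ofReal (cantorWt_nonneg hw₁.le hw₂.le x)
    rw [← hμI x]
    exact measure_mono Set.inter_subset_right
  have hvle : ∀ x : Fin n → Bool, (volume (s ∩ cantorInterval x)).toReal ≤ (1/3:ℝ)^n := by
    intro x
    apply ENNReal.toReal_le_of_le_ofReal (by positivity)
    rw [← hvolI x]
    exact measure_mono Set.inter_subset_right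
  have h3n : (3:ℝ)^n * (1/3:ℝ)^n = 1 := by
    rw [← mul_pow]
    norm_num
  -- pointwise bound
  have key : ∀ x : Fin n → Bool,
      |(μ (s ∩ cantorInterval x)).toReal
        - 3^n * cantorWt w₁ w₂ x * (volume (s ∩ cantorInterval x)).toReal|
      ≤ if cantorLeft x ≤ t ∧ t < cantorLeft x + (1/3:ℝ)^n then w₂^n else 0 := by
    intro x
    have hWnn := cantorWt_nonneg hw₁.le hw₂.le x
    have hWle := cantorWt_le hw₁.le hw x
    by_cases hcase1 : t < cantorLeft x
    · have he : s ∩ cantorInterval x = ∅ := by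
        ext z
        simp only [hs, Set.mem_inter_iff, Set.mem_Icc, Set.mem_empty_iff_false, iff_false,
          cantorInterval, not_and]
        intro h1 h2 h3
        linarith
      rw [if_neg (by intro hc; linarith [hc.1]), he]
      simp
    · by_cases hcase2 : cantorLeft x + (1/3:ℝ)^n ≤ t
      · have he : s ∩ cantorInterval x = cantorInterval x := by
          apply Set.inter_eq_self_of_subset_right
          intro z hz
          rw [hs]
          exact ⟨le_trans (cantorLeft_nonneg x) hz.1, le_trans hz.2 hcase2⟩
        rw [if_neg (fun hc => absurd hcase2 (not_le.mpr hc.2)), he, hμI x,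
          ENNReal.toReal_ofReal hWnn, hvolI x, ENNReal.toReal_ofReal (by positivity)]
        have heq : (3:ℝ)^n * cantorWt w₁ w₂ x * (1/3:ℝ)^n = cantorWt w₁ w₂ x := by
          rw [mul_comm ((3:ℝ)^n) _, mul_assoc, h3n, mul_one]
        rw [heq, sub_self, abs_zero]
      · rw [if_pos ⟨not_lt.mp hcase1, not_le.mp hcase2⟩]
        have hG1 : 0 ≤ (3:ℝ)^n * cantorWt w₁ w₂ x * (volume (s ∩ cantorInterval x)).toReal := by
          have := ENNReal.toReal_nonneg (a := volume (s ∩ cantorInterval x))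
          positivity
        have hG2 : (3:ℝ)^n * cantorWt w₁ w₂ x * (volume (s ∩ cantorInterval x)).toReal
            ≤ cantorWt w₁ w₂ x := by
          calc (3:ℝ)^n * cantorWt w₁ w₂ x * (volume (s ∩ cantorInterval x)).toReal
              ≤ (3:ℝ)^n * cantorWt w₁ w₂ x * (1/3:ℝ)^n := by
                apply mul_le_mul_of_nonneg_left (hvle x) (by positivity)
            _ = cantorWt w₁ w₂ x := by
                rw [mul_comm ((3:ℝ)^n) _, mul_assoc, h3n, mul_one]
        have hF1 : 0 ≤ (μ (s ∩ cantorInterval x)).toReal := ENNReal.toReal_nonneg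
        have hF2 : (μ (s ∩ cantorInterval x)).toReal ≤ w₂^n := (hFle x).trans hWle
        rw [abs_le]
        constructor
        · linarith [hG2.trans hWle]
        · linarith
  -- at most one interval contributes
  have hsum_bound : ∑ x : Fin n → Bool,
      (if cantorLeft x ≤ t ∧ t < cantorLeft x + (1/3:ℝ)^n then w₂^n else 0) ≤ w₂^n := by
    by_cases hex : ∃ x₀ : Fin n → Bool, cantorLeft x₀ ≤ t ∧ t < cantorLeft x₀ + (1/3:ℝ)^n
    · obtain ⟨x₀, hx₀⟩ := hex
      have hsingle : ∑ x : Fin n → Bool,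
          (if cantorLeft x ≤ t ∧ t < cantorLeft x + (1/3:ℝ)^n then w₂^n else (0:ℝ))
          = if cantorLeft x₀ ≤ t ∧ t < cantorLeft x₀ + (1/3:ℝ)^n then w₂^n else 0 := by
        apply Finset.sum_eq_single_of_mem x₀ (Finset.mem_univ x₀)
        intro x _ hx
        rw [if_neg]
        intro hc
        rcases cantorLeft_sep x x₀ hx with h1 | h1
        · linarith [hc.1, hc.2, hx₀.1, hx₀.2]
        · linarith [hc.1, hc.2, hx₀.1, hx₀.2]
      rw [hsingle, if_pos hx₀]
    · push_neg at hex
      have : ∑ x : Fin n → Bool,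
          (if cantorLeft x ≤ t ∧ t < cantorLeft x + (1/3:ℝ)^n then w₂^n else (0:ℝ)) = 0 := by
        apply Finset.sum_eq_zero
        intro x _
        rw [if_neg]
        intro hc
        exact absurd hc.2 (not_lt.mpr (hex x hc.1))
      rw [this]
      exact hw2n
  -- assemble
  rw [hFs, hGs, ← Finset.sum_sub_distrib]
  calc |∑ x : Fin n → Bool, ((μ (s ∩ cantorInterval x)).toReal
          - 3^n * cantorWt w₁ w₂ x * (volume (s ∩ cantorInterval x)).toReal)|
      ≤ ∑ x : Fin n → Bool, |(μ (s ∩ cantorInterval x)).toReal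
          - 3^n * cantorWt w₁ w₂ x * (volume (s ∩ cantorInterval x)).toReal| :=
        Finset.abs_sum_le_sum_abs _ _
    _ ≤ ∑ x : Fin n → Bool,
          (if cantorLeft x ≤ t ∧ t < cantorLeft x + (1/3:ℝ)^n then w₂^n else 0) :=
        Finset.sum_le_sum (fun x _ => key x)
    _ ≤ w₂^n := hsum_bound
    _ ≤ w₂^n / w₁ := by
        rw [le_div_iff₀ hw₁]
        have h1 : w₁ ≤ 1 := by linarith
        have h2 : w₂^n * w₁ ≤ w₂^n * 1 := mul_le_mul_of_nonneg_left h1 hw2n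
        linarith
end
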